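/- Define R(r) = 1/(2√(1 − r²)) for 0 < r < 1, and let R^k denote its k-fold iterate. For every n ≥ 2 and every unit-distance embedding of the complete graph K_n in any Euclidean space ℝᵐ, the images of the vertices lie on a sphere of radius R^{n−2}(1/2) contained in an (n−1)-dimensional affine subspace of ℝᵐ; moreover R^{n−2}(1/2) < √2/2. -/

import Mathlib

/-- A unit-distance embedding of a simple graph `G` in `ℝⁿ`: an injective map sending
adjacent vertices to points at distance 1, such that no other vertex lies on the
closed segment between the endpoints of an edge. -/
def IsUDEmbedding {V : Type*} (G : SimpleGraph V) {n : ℕ}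
    (f : V → EuclideanSpace ℝ (Fin n)) : Prop :=
  Function.Injective f ∧
  (∀ ⦃u v⦄, G.Adj u v → dist (f u) (f v) = 1) ∧
  (∀ ⦃u v⦄, G.Adj u v → ∀ w, w ≠ u → w ≠ v → f w ∉ segment ℝ (f u) (f v))

/-- `G` has a unit-distance embedding in `ℝⁿ`. -/
def HasUDEmbedding {V : Type*} (G : SimpleGraph V) (n : ℕ) : Prop :=
  ∃ f : V → EuclideanSpace ℝ (Fin n), IsUDEmbedding G f

/-- `G` has a unit-distance embedding in `ℝⁿ` whose image lies on a sphere of radius `r`. -/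
def HasSphericalEmbeddingRadius {V : Type*} (G : SimpleGraph V) (n : ℕ) (r : ℝ) : Prop :=
  ∃ f : V → EuclideanSpace ℝ (Fin n), IsUDEmbedding G f ∧
    ∃ c : EuclideanSpace ℝ (Fin n), ∀ v, dist (f v) c = r

/-- `G` has a unit-distance embedding in `ℝⁿ` whose image lies on a sphere
of radius `0 < r < 1`. -/
def HasSphericalEmbedding {V : Type*} (G : SimpleGraph V) (n : ℕ) : Prop :=
  ∃ r : ℝ, 0 < r ∧ r < 1 ∧ HasSphericalEmbeddingRadius G n r

/-- The dimension of a graph: the least `n` such that `G` has a unit-distance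
embedding in `ℝⁿ`. -/
noncomputable def graphDim {V : Type*} (G : SimpleGraph V) : ℕ :=
  sInf {n | HasUDEmbedding G n}

/-- The spherical dimension of a graph: the least `n` such that `G` has a unit-distance
embedding in `ℝⁿ` on a sphere of radius strictly between 0 and 1.  By convention the
spherical dimension of a graph with at most one vertex is `0`. -/
noncomputable def sphericalDim {V : Type*} [Fintype V] (G : SimpleGraph V) : ℕ :=
  if Fintype.card V ≤ 1 then 0 else sInf {n | HasSphericalEmbedding G n}

/-- The join `G + H` of two graphs: disjoint union together with all edges between them. -/
def graphJoin {V W : Type*} (G : SimpleGraph V) (H : SimpleGraph W) :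
    SimpleGraph (V ⊕ W) :=
  SimpleGraph.fromRel (fun x y =>
    match x, y with
    | Sum.inl a, Sum.inl b => G.Adj a b
    | Sum.inr a, Sum.inr b => H.Adj a b
    | Sum.inl _, Sum.inr _ => True
    | Sum.inr _, Sum.inl _ => False)

/-- `H` is a minor of `G` (branch-set formulation, equivalent to being obtainable from `G`
by vertex deletions, edge deletions and edge contractions). -/
def IsMinorOf {W V : Type*} (H : SimpleGraph W) (G : SimpleGraph V) : Prop :=
  ∃ φ : W → Set V,
    (∀ w, (SimpleGraph.induce (φ w) G).Connected) ∧
    (Pairwise fun w w' => Disjoint (φ w) (φ w')) ∧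
    (∀ ⦃w w'⦄, H.Adj w w' → ∃ x ∈ φ w, ∃ y ∈ φ w', G.Adj x y)

/-- `H` is a proper minor of `G`: a minor that is not isomorphic to `G`. -/
def IsProperMinorOf {W V : Type*} (H : SimpleGraph W) (G : SimpleGraph V) : Prop :=
  IsMinorOf H G ∧ ¬ Nonempty (H ≃g G)

/-- `G` is minor minimal with respect to dimension `n`. -/
def MinorMinimalDim {V : Type*} (G : SimpleGraph V) (n : ℕ) : Prop :=
  graphDim G = n ∧
  ∀ (W : Type) [Fintype W] (H : SimpleGraph W), Nonempty W →
    IsProperMinorOf H G → graphDim H < n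

/-- `G` is minor minimal with respect to spherical dimension `n`. -/
def MinorMinimalSDim {V : Type*} [Fintype V] (G : SimpleGraph V) (n : ℕ) : Prop :=
  sphericalDim G = n ∧
  ∀ (W : Type) [Fintype W] (H : SimpleGraph W), Nonempty W →
    IsProperMinorOf H G → sphericalDim H < n

/-- The vertex type of the graph `Sₙ`. -/
def SType : ℕ → Type
  | 0 => Fin 0
  | 1 => Fin 1
  | 2 => Fin 2
  | 3 => Fin 3
  | (n + 4) => Fin (n + 1) ⊕ Fin 3

instance : (n : ℕ) → Fintype (SType n)
  | 0 => inferInstanceAs (Fintype (Fin 0))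
  | 1 => inferInstanceAs (Fintype (Fin 1))
  | 2 => inferInstanceAs (Fintype (Fin 2))
  | 3 => inferInstanceAs (Fintype (Fin 3))
  | (n + 4) => inferInstanceAs (Fintype (Fin (n + 1) ⊕ Fin 3))

/-- The graph `Sₙ`:  `S₁ = ε₁`, `S₂ = ε₂`, `S₃ = ε₃`, and `Sₙ = K_{n-3} + ε₃` for `n ≥ 4`. -/
def SGraph : (n : ℕ) → SimpleGraph (SType n)
  | 0 => ⊥
  | 1 => ⊥
  | 2 => ⊥
  | 3 => ⊥
  | (n + 4) => graphJoin (⊤ : SimpleGraph (Fin (n + 1))) (⊥ : SimpleGraph (Fin 3))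


/-- The radius-increment function `R(r) = 1/(2√(1-r²))`. -/
noncomputable def Rfun (r : ℝ) : ℝ := 1 / (2 * Real.sqrt (1 - r ^ 2))

/-! If `n` points are pairwise at unit distance, then `dist (pᵢ, pⱼ)² = 1 - δᵢⱼ`, so for weights
`w` with `∑ wᵢ = 0` the polarization identity gives `‖∑ wᵢ pᵢ‖² = (∑ wᵢ²) / 2`. Hence no nontrivial
such combination vanishes: the points are affinely independent and span an `(n - 1)`-dimensional
affine subspace. The weights `1/n - δᵢᵥ` show that each point lies at distance `√((n - 1) / (2n))`
from the centroid, and this radius is `R^[n-2] (1/2)` because `R` maps `√(x / (2(x + 1)))` to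
`√((x + 1) / (2(x + 2)))`. -/

open Finset

theorem Rfun_sqrt_div {x : ℝ} (hx : 0 ≤ x) :
    Rfun √(x / (2 * (x + 1))) = √((x + 1) / (2 * (x + 2))) := by
  have h : 1 - x / (2 * (x + 1)) = (x + 2) / (2 * (x + 1)) := by field_simp; ring
  rw [Rfun, Real.sq_sqrt (by positivity), h, Real.sqrt_div' _ (by positivity),
    Real.sqrt_div' _ (by positivity), Real.sqrt_mul' _ (by positivity),
    Real.sqrt_mul' _ (by positivity)]
  have : 0 < √(x + 2) := Real.sqrt_pos.2 (by positivity)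
  field_simp
  rw [Real.sq_sqrt zero_le_two]

theorem Rfun_iterate_half (k : ℕ) :
    Rfun^[k] (1 / 2) = √((k + 1) / (2 * (k + 2))) := by
  induction k with
  | zero => norm_num [show (1 / 4 : ℝ) = (1 / 2) ^ 2 by norm_num]
  | succ k ih =>
    rw [Function.iterate_succ_apply', ih]
    convert Rfun_sqrt_div (x := (k : ℝ) + 1) (by positivity) using 3 <;> push_cast <;> ring

theorem Rfun_iterate_half_lt (k : ℕ) : Rfun^[k] (1 / 2) < √2 / 2 := by
  rw [Rfun_iterate_half, Real.sqrt_lt' (by positivity), div_pow, Real.sq_sqrt zero_le_two,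
    div_lt_div_iff₀ (by positivity) (by norm_num)]
  linarith

section UnitSimplex

variable {V P ι : Type*} [NormedAddCommGroup V] [InnerProductSpace ℝ V] [MetricSpace P]
  [NormedAddTorsor V P] {p : ι → P}

theorem norm_weightedVSub_sq_of_pairwise_dist_eq_one
    (hp : Pairwise fun i j => dist (p i) (p j) = 1) (s : Finset ι) {w : ι → ℝ}
    (hw : ∑ i ∈ s, w i = 0) :
    ‖s.weightedVSub p w‖ ^ 2 = (∑ i ∈ s, w i ^ 2) / 2 := by
  classical
  have hd : ∀ i j, dist (p i) (p j) * dist (p i) (p j) = 1 - if i = j then 1 else 0 := by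
    intro i j
    rcases eq_or_ne i j with rfl | hij
    · simp
    · simp [hp hij, hij]
  rw [← real_inner_self_eq_norm_sq, EuclideanGeometry.inner_weightedVSub p hw p hw]
  simp only [hd, mul_sub, mul_one, mul_ite, mul_zero, sum_sub_distrib, sum_ite_eq,
    ← sum_mul_sum, hw]
  simp only [sum_ite_mem, inter_self, zero_sub, neg_neg, sq]

theorem affineIndependent_of_pairwise_dist_eq_one
    (hp : Pairwise fun i j => dist (p i) (p j) = 1) : AffineIndependent ℝ p := by
  intro s w hw h0 i hi
  have hsq := norm_weightedVSub_sq_of_pairwise_dist_eq_one hp s hw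
  rw [h0, norm_zero, eq_comm, zero_pow two_ne_zero, div_eq_zero_iff, or_iff_left two_ne_zero,
    sum_eq_zero_iff_of_nonneg fun j _ => sq_nonneg (w j)] at hsq
  exact pow_eq_zero_iff two_ne_zero |>.1 (hsq i hi)

theorem dist_centroid_of_pairwise_dist_eq_one [Fintype ι]
    (hp : Pairwise fun i j => dist (p i) (p j) = 1) (i : ι) :
    dist (p i) (univ.centroid ℝ p) = √((Fintype.card ι - 1) / (2 * Fintype.card ι)) := by
  classical
  have : Nonempty ι := ⟨i⟩
  have hn : (Fintype.card ι : ℝ) ≠ 0 := Nat.cast_ne_zero.2 Fintype.card_ne_zero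
  have hvsub : univ.centroid ℝ p -ᵥ p i
      = univ.weightedVSub p (univ.centroidWeights ℝ - Pi.single i 1) := by
    rw [centroid_def, ← univ.affineCombination_piSingle ℝ p (mem_univ i), affineCombination_vsub]
  have hw : ∑ j, (univ.centroidWeights ℝ - Pi.single i 1 : ι → ℝ) j = 0 := by
    simp [hn]
  rw [dist_comm, dist_eq_norm_vsub V, hvsub, ← Real.sqrt_sq (norm_nonneg _),
    norm_weightedVSub_sq_of_pairwise_dist_eq_one hp _ hw]
  congr 1
  simp only [Pi.sub_apply, centroidWeights_apply, card_univ, Pi.single_apply, sub_sq, inv_pow,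
    mul_ite, mul_one, mul_zero, ite_pow, one_pow, ne_eq, OfNat.ofNat_ne_zero, not_false_eq_true,
    zero_pow, sum_add_distrib, sum_sub_distrib, sum_const, nsmul_eq_mul, sum_ite_eq', mem_univ,
    ↓reduceIte]
  field_simp
  ring

end UnitSimplex

/-- For every `n ≥ 2`, `R^[n-2] (1/2) < √2/2`, and for every unit-distance
embedding of `Kₙ` in any `ℝᵐ`, the images of the vertices lie on a sphere of radius
`R^[n-2] (1/2)` contained in an `(n-1)`-dimensional affine subspace of `ℝᵐ`. -/
theorem stmt13 (n : ℕ) (hn : 2 ≤ n) :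
    Rfun^[n - 2] (1 / 2) < Real.sqrt 2 / 2 ∧
    ∀ (m : ℕ) (f : Fin n → EuclideanSpace ℝ (Fin m)),
      IsUDEmbedding (⊤ : SimpleGraph (Fin n)) f →
      ∃ (A : AffineSubspace ℝ (EuclideanSpace ℝ (Fin m))) (c : EuclideanSpace ℝ (Fin m)),
        c ∈ A ∧ Module.finrank ℝ A.direction = n - 1 ∧
        ∀ v : Fin n, f v ∈ A ∧ dist (f v) c = Rfun^[n - 2] (1 / 2) := by
  obtain ⟨k, rfl⟩ := Nat.exists_eq_add_of_le' hn
  refine ⟨Rfun_iterate_half_lt k, fun m f hf => ?_⟩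
  have hunit : Pairwise fun i j => dist (f i) (f j) = 1 := fun _ _ hij => hf.2.1 hij
  refine ⟨affineSpan ℝ (Set.range f), univ.centroid ℝ f,
    centroid_mem_affineSpan_of_card_ne_zero ℝ f (by simp), ?_,
    fun v => ⟨mem_affineSpan ℝ (Set.mem_range_self v), ?_⟩⟩
  · rw [direction_affineSpan]
    exact (affineIndependent_of_pairwise_dist_eq_one hunit).finrank_vectorSpan (by simp)
  · rw [dist_centroid_of_pairwise_dist_eq_one hunit, Rfun_iterate_half, Fintype.card_fin]
    push_cast
    congr 1
    ring
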